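/- Let E₀ = B² be the Euclidean unit disc in ℝ², and let E₁ = {(x₁,x₂) : x₁²/4 + 16x₂² ≤ 1}, c₀ = (0,0), c₁ = (7/5, 4/5), and let E_{1/2} = {(x₁,x₂) : x₁²/2 + 4x₂² ≤ 1} be the mean ellipsoid with λ = 1/2. Then the point x = (-3/5, 4/5) belongs to (E₀ + c₀) ∩ (E₁ + c₁) but x ∉ E_{1/2} + c for every c on the segment [c₀, c₁]. -/
import Mathlib


open scoped Pointwise

theorem stmt_12
    (E₀ E₁ Ehalf : Set (ℝ × ℝ))
    (hE₀ : E₀ = {p | p.1 ^ 2 + p.2 ^ 2 ≤ 1})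
    (hE₁ : E₁ = {p | p.1 ^ 2 / 4 + 16 * p.2 ^ 2 ≤ 1})
    (hEhalf : Ehalf = {p | p.1 ^ 2 / 2 + 4 * p.2 ^ 2 ≤ 1})
    (c₀ c₁ x : ℝ × ℝ)
    (hc₀ : c₀ = (0, 0)) (hc₁ : c₁ = (7 / 5, 4 / 5)) (hx : x = (-(3 / 5), 4 / 5)) :
    x ∈ (E₀ + ({c₀} : Set (ℝ × ℝ))) ∩ (E₁ + ({c₁} : Set (ℝ × ℝ))) ∧
      ∀ c ∈ segment ℝ c₀ c₁, x ∉ Ehalf + ({c} : Set (ℝ × ℝ)) := by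
  subst hE₀ hE₁ hEhalf hc₀ hc₁ hx
  refine ⟨⟨?_, ?_⟩, ?_⟩
  · exact Set.mem_add.2 ⟨(-(3/5), 4/5), by norm_num, (0,0), rfl, by norm_num⟩
  · exact Set.mem_add.2 ⟨(-2, 0), by norm_num, (7/5, 4/5), rfl, by
      simp [Prod.ext_iff]; norm_num⟩
  · rintro c ⟨a, b, ha, hb, hab, rfl⟩ hc
    rcases Set.mem_add.1 hc with ⟨y, hy, z, hz, hyz⟩
    simp only [Set.mem_singleton_iff] at hz
    subst hz
    have hb1 : b ≤ 1 := by linarith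
    have h1 : y.1 = -(3/5) - b * (7/5) := by
      have := congrArg Prod.fst hyz
      simp [Prod.smul_def] at this ⊢
      linarith
    have h2 : y.2 = 4/5 - b * (4/5) := by
      have := congrArg Prod.snd hyz
      simp [Prod.smul_def] at this ⊢
      linarith
    simp only [Set.mem_setOf_eq, h1, h2] at hy
    nlinarith [sq_nonneg (b - 107/177), sq_nonneg b]
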